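/- arXiv:0802.3800 — 5 statements merged into one kernel-verified Lean document; each statement's English description precedes it below -/
import Mathlib

section
/- Let S and T be a Moufang–Mal'tsev pair, i.e. linear maps from M into L satisfying the generalized Maurer–Cartan equations, and let P := −S − T and Y(x;y) := (1/6)([S_x,S_y] + [T_x,T_y] + [P_x,P_y]). Then for all x, y in M one has [S_x, T_y] = −Y(x;y) + (1/3)·S_{[x,y]} − (1/3)·T_{[x,y]}. -/
/-!
Comparing `[T_x, T_y]` with `-[T_y, T_x]` through the second Maurer–Cartan equation shows that
`T` is antisymmetric on the bracket of `M`. Expanding `[P_x, P_y]` with `P = -S - T` and the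
symmetry `[S_x, T_y] = [T_x, S_y]` then gives, with integer coefficients,
`6 Y(x;y) = 2 (S - T)_{[x,y]} - 6 [S_x, T_y]`; dividing by `6` is the theorem.
-/

/-- The generalized Maurer–Cartan equations for a pair of maps `S T : M → L`, where `br` is the
bracket of `M`. -/
structure IsMoufangMaltsevPair {M L : Type*} [LieRing L] (br : M → M → M) (S T : M → L) :
    Prop where
  lie_S_S : ∀ x y : M, ⁅S x, S y⁆ = S (br x y) - 2 • ⁅S x, T y⁆
  lie_T_T : ∀ x y : M, ⁅T x, T y⁆ = T (br y x) - 2 • ⁅T x, S y⁆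
  lie_S_T : ∀ x y : M, ⁅S x, T y⁆ = ⁅T x, S y⁆

namespace IsMoufangMaltsevPair

variable {M L : Type*} [LieRing L] {br : M → M → M} {S T : M → L}

theorem lie_S_T_swap (h : IsMoufangMaltsevPair br S T) (x y : M) :
    ⁅S y, T x⁆ = -⁅S x, T y⁆ := by
  rw [h.lie_S_T y x, lie_skew]

theorem T_br_swap (h : IsMoufangMaltsevPair br S T) (x y : M) :
    T (br y x) = -T (br x y) := by
  have hxy := h.lie_T_T x y
  have hyx := h.lie_T_T y x
  rw [← h.lie_S_T] at hxy
  rw [← h.lie_S_T, h.lie_S_T_swap] at hyx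
  rw [← lie_skew, hyx] at hxy
  linear_combination (norm := abel) -hxy

theorem lie_P_P {P : M → L} (h : IsMoufangMaltsevPair br S T) (hP : ∀ x, P x = -S x - T x)
    (x y : M) : ⁅P x, P y⁆ = ⁅S x, S y⁆ + 2 • ⁅S x, T y⁆ + ⁅T x, T y⁆ := by
  simp only [hP, sub_lie, lie_sub, neg_lie, lie_neg, ← h.lie_S_T]
  abel

/-- Six times the Yamagutian `Y(x;y)`. -/
theorem lie_S_S_add_lie_T_T_add_lie_P_P {P : M → L} (h : IsMoufangMaltsevPair br S T)
    (hP : ∀ x, P x = -S x - T x) (x y : M) :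
    ⁅S x, S y⁆ + ⁅T x, T y⁆ + ⁅P x, P y⁆ = 2 • (S (br x y) - T (br x y)) - 6 • ⁅S x, T y⁆ := by
  rw [h.lie_P_P hP, h.lie_T_T, h.lie_S_S, h.T_br_swap, ← h.lie_S_T]
  abel

end IsMoufangMaltsevPair

/-- For a Moufang–Mal'tsev pair (S, T), with P := -S - T and
Yamagutian Y, one has [Sx, Ty] = -Y(x;y) + (1/3)·S[x,y] - (1/3)·T[x,y]. -/
theorem stmt_1 {k : Type*} [Field k] [CharZero k]
    {M L : Type*} [AddCommGroup M] [Module k M] [LieRing L] [LieAlgebra k L]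
    (br : M →ₗ[k] M →ₗ[k] M) (S T : M →ₗ[k] L)
    (hSS : ∀ x y : M, ⁅S x, S y⁆ = S (br x y) - 2 • ⁅S x, T y⁆)
    (hTT : ∀ x y : M, ⁅T x, T y⁆ = T (br y x) - 2 • ⁅T x, S y⁆)
    (hST : ∀ x y : M, ⁅S x, T y⁆ = ⁅T x, S y⁆)
    (P : M →ₗ[k] L) (hP : P = -S - T)
    (Y : M → M → L)
    (hY : ∀ x y : M, Y x y = (1/6 : k) • (⁅S x, S y⁆ + ⁅T x, T y⁆ + ⁅P x, P y⁆)) :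
    ∀ x y : M, ⁅S x, T y⁆ =
      -Y x y + (1/3 : k) • S (br x y) - (1/3 : k) • T (br x y) := by
  intro x y
  have hpair : IsMoufangMaltsevPair (br · ·) S T := ⟨hSS, hTT, hST⟩
  have hPx : ∀ z, P z = -S z - T z := fun z => LinearMap.congr_fun hP z
  rw [hY, hpair.lie_S_S_add_lie_T_T_add_lie_P_P hPx]
  module
end

section
/- Let S and T be a Moufang–Mal'tsev pair, i.e. linear maps from M into L satisfying the generalized Maurer–Cartan equations, let P := −S − T, Y(x;y) := (1/6)([S_x,S_y] + [T_x,T_y] + [P_x,P_y]), and define the triality conjugated translation P⁺ := S − T. Then for all x, y in M one has 6·Y(x;y) = [P⁺_x, P⁺_y] + P⁺_{[x,y]}. -/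
section MoufangMaltsev

variable {k M L : Type*} [CommRing k] [AddCommGroup M] [Module k M] [LieRing L]
  [LieAlgebra k L]

structure IsMoufangMaltsevPair_s3 (br : M →ₗ[k] M →ₗ[k] M) (S T : M →ₗ[k] L) : Prop where
  lie_S_S : ∀ x y : M, ⁅S x, S y⁆ = S (br x y) - 2 • ⁅S x, T y⁆
  lie_T_T : ∀ x y : M, ⁅T x, T y⁆ = T (br y x) - 2 • ⁅T x, S y⁆
  lie_S_T_comm : ∀ x y : M, ⁅S x, T y⁆ = ⁅T x, S y⁆

namespace IsMoufangMaltsevPair_s3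

variable {br : M →ₗ[k] M →ₗ[k] M} {S T : M →ₗ[k] L}

theorem S_apply_br (h : IsMoufangMaltsevPair_s3 br S T) (x y : M) :
    S (br x y) = ⁅S x, S y⁆ + 2 • ⁅S x, T y⁆ := by
  rw [h.lie_S_S]
  abel

theorem T_apply_br (h : IsMoufangMaltsevPair_s3 br S T) (x y : M) :
    T (br x y) = -⁅T x, T y⁆ - 2 • ⁅S x, T y⁆ := by
  rw [lie_skew (T y) (T x), h.lie_T_T y x, ← lie_skew (S x) (T y)]
  abel

/-- The right-hand side is `6 • Y(x;y)`, written with `P = -S - T`. -/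
theorem lie_sub_add_sub_apply_br (h : IsMoufangMaltsevPair_s3 br S T) (x y : M) :
    ⁅(S - T) x, (S - T) y⁆ + (S - T) (br x y) =
      ⁅S x, S y⁆ + ⁅T x, T y⁆ + ⁅(-S - T) x, (-S - T) y⁆ := by
  simp only [LinearMap.sub_apply, LinearMap.neg_apply, sub_lie, lie_sub, neg_lie, lie_neg,
    h.S_apply_br, h.T_apply_br, h.lie_S_T_comm x y]
  abel

end IsMoufangMaltsevPair_s3

end MoufangMaltsev

/-- For a Moufang–Mal'tsev pair (S, T), with P := -S - T,
Yamagutian Y, and P⁺ := S - T, one has 6·Y(x;y) = [P⁺x, P⁺y] + P⁺[x,y]. -/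
theorem stmt_3 {k : Type*} [Field k] [CharZero k]
    {M L : Type*} [AddCommGroup M] [Module k M] [LieRing L] [LieAlgebra k L]
    (br : M →ₗ[k] M →ₗ[k] M) (S T : M →ₗ[k] L)
    (hSS : ∀ x y : M, ⁅S x, S y⁆ = S (br x y) - 2 • ⁅S x, T y⁆)
    (hTT : ∀ x y : M, ⁅T x, T y⁆ = T (br y x) - 2 • ⁅T x, S y⁆)
    (hST : ∀ x y : M, ⁅S x, T y⁆ = ⁅T x, S y⁆)
    (P : M →ₗ[k] L) (hP : P = -S - T)
    (Y : M → M → L)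
    (hY : ∀ x y : M, Y x y = (1/6 : k) • (⁅S x, S y⁆ + ⁅T x, T y⁆ + ⁅P x, P y⁆))
    (Pplus : M →ₗ[k] L) (hPplus : Pplus = S - T) :
    ∀ x y : M, 6 • Y x y = ⁅Pplus x, Pplus y⁆ + Pplus (br x y) := by
  intro x y
  subst hP hPplus
  rw [hY, (IsMoufangMaltsevPair_s3.mk hSS hTT hST).lie_sub_add_sub_apply_br,
    ← Nat.cast_smul_eq_nsmul k, smul_smul]
  norm_num
end

section
/- Let S and T be a Moufang–Mal'tsev pair, i.e. linear maps from M into L satisfying the generalized Maurer–Cartan equations, let P := −S − T, Y(x;y) := (1/6)([S_x,S_y] + [T_x,T_y] + [P_x,P_y]), and define the triality conjugated translation T⁺ := P − S. Then for all x, y in M one has 6·Y(x;y) = [T⁺_x, T⁺_y] + T⁺_{[x,y]}. -/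
/-! The Maurer–Cartan equations express `S [x,y]` and `T [x,y]` through brackets of `S` and `T`.
Substituting them, and using `[S x, T y] = [T x, S y]`, both sides of the identity become
`2 [S x, S y] + 2 [T x, T y] + 2 [S x, T y]`. -/

theorem nsmul_one_div_smul_self {k L : Type*} [Field k] [CharZero k] [AddCommGroup L]
    [Module k L] (n : ℕ) (hn : n ≠ 0) (v : L) : n • (1 / n : k) • v = v := by
  rw [← Nat.cast_smul_eq_nsmul k, one_div, smul_inv_smul₀ (Nat.cast_ne_zero.mpr hn)]

namespace MoufangMaltsevPair

variable {k M L : Type*} [CommRing k] [AddCommGroup M] [Module k M] [LieRing L]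
  [LieAlgebra k L] {br : M →ₗ[k] M →ₗ[k] M} {S T : M →ₗ[k] L}

theorem lie_T_S (hST : ∀ x y : M, ⁅S x, T y⁆ = ⁅T x, S y⁆) (x y : M) :
    ⁅T y, S x⁆ = -⁅S x, T y⁆ := by
  rw [← hST y x, ← lie_skew, hST x y]

theorem S_br (hSS : ∀ x y : M, ⁅S x, S y⁆ = S (br x y) - 2 • ⁅S x, T y⁆) (x y : M) :
    S (br x y) = ⁅S x, S y⁆ + 2 • ⁅S x, T y⁆ := by
  rw [hSS x y, sub_add_cancel]

theorem T_br (hTT : ∀ x y : M, ⁅T x, T y⁆ = T (br y x) - 2 • ⁅T x, S y⁆)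
    (hST : ∀ x y : M, ⁅S x, T y⁆ = ⁅T x, S y⁆) (x y : M) :
    T (br x y) = -⁅T x, T y⁆ - 2 • ⁅S x, T y⁆ := by
  have h := hTT y x
  rw [← lie_skew (T y) (T x), lie_T_S hST, eq_sub_iff_add_eq] at h
  rw [← h]
  abel

end MoufangMaltsevPair

open MoufangMaltsevPair in
/-- For a Moufang–Mal'tsev pair (S, T), with P := -S - T,
Yamagutian Y, and T⁺ := P - S, one has 6·Y(x;y) = [T⁺x, T⁺y] + T⁺[x,y]. -/
theorem stmt_4 {k : Type*} [Field k] [CharZero k]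
    {M L : Type*} [AddCommGroup M] [Module k M] [LieRing L] [LieAlgebra k L]
    (br : M →ₗ[k] M →ₗ[k] M) (S T : M →ₗ[k] L)
    (hSS : ∀ x y : M, ⁅S x, S y⁆ = S (br x y) - 2 • ⁅S x, T y⁆)
    (hTT : ∀ x y : M, ⁅T x, T y⁆ = T (br y x) - 2 • ⁅T x, S y⁆)
    (hST : ∀ x y : M, ⁅S x, T y⁆ = ⁅T x, S y⁆)
    (P : M →ₗ[k] L) (hP : P = -S - T)
    (Y : M → M → L)
    (hY : ∀ x y : M, Y x y = (1/6 : k) • (⁅S x, S y⁆ + ⁅T x, T y⁆ + ⁅P x, P y⁆))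
    (Tplus : M →ₗ[k] L) (hTplus : Tplus = P - S) :
    ∀ x y : M, 6 • Y x y = ⁅Tplus x, Tplus y⁆ + Tplus (br x y) := by
  subst hP hTplus
  intro x y
  rw [hY, show (1 / 6 : k) = 1 / ((6 : ℕ) : k) by norm_num, nsmul_one_div_smul_self 6 (by norm_num)]
  simp only [LinearMap.sub_apply, LinearMap.neg_apply, sub_lie, lie_sub, neg_lie, lie_neg,
    S_br hSS, T_br hTT hST, ← hST x y]
  abel
end

section
/- Let S⁺ : M → L be a linear map, Y : M × M → L a bilinear map, [·,·] : M × M → M a bilinear binary bracket and [·,·,·] : M × M × M → M a trilinear ternary bracket. Assume (i) 6·Y(x;y) = [S⁺_x, S⁺_y] + S⁺_{[x,y]} for all x, y in M, and (ii) the reductivity condition 6·[Y(x;y), S⁺_z] = S⁺_{[x,y,z]} for all x, y, z in M. Then for all x, y, z, w in M: 36·[Y(x;y), Y(z;w)] − 6·Y([x,y,z]; w) − 6·Y(z; [x,y,w]) = S⁺_{[x,y,[z,w]] − [[x,y,z],w] − [z,[x,y,w]]}. -/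
/-!
Put `D := ad (6 • Y x y)`. By reductivity `D ∘ S⁺ = S⁺ ∘ [x,y,·]`, and `D` is a derivation of the
bracket of `L`. Applying `D` to `6 • Y z w = [S⁺_z, S⁺_w] + S⁺_{[z,w]}` and comparing with
`6 • Y([x,y,z]; w)` and `6 • Y(z; [x,y,w])`, expanded by the same identity, the brackets
`[S⁺_{[x,y,z]}, S⁺_w]` and `[S⁺_z, S⁺_{[x,y,w]}]` cancel and only `S⁺` of the stated element remains.
-/

theorem lie_lie_add_eq_of_lie_comp {R M L : Type*} [CommRing R] [AddCommGroup M] [Module R M]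
    [LieRing L] [LieAlgebra R L] (S : M →ₗ[R] L) (T : M →ₗ[R] M) (a : L)
    (hST : ∀ z, ⁅a, S z⁆ = S (T z)) (z w u : M) :
    ⁅a, ⁅S z, S w⁆ + S u⁆ = ⁅S (T z), S w⁆ + ⁅S z, S (T w)⁆ + S (T u) := by
  rw [lie_add, leibniz_lie, hST, hST, hST]

theorem stmt_8_general {k : Type*} [Field k]
    {M L : Type*} [AddCommGroup M] [Module k M] [LieRing L] [LieAlgebra k L]
    (br : M →ₗ[k] M →ₗ[k] M) (tbr : M →ₗ[k] M →ₗ[k] M →ₗ[k] M)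
    (Splus : M →ₗ[k] L) (Y : M →ₗ[k] M →ₗ[k] L)
    (hY : ∀ x y : M, 6 • Y x y = ⁅Splus x, Splus y⁆ + Splus (br x y))
    (hRed : ∀ x y z : M, 6 • ⁅Y x y, Splus z⁆ = Splus (tbr x y z)) :
    ∀ x y z w : M,
      36 • ⁅Y x y, Y z w⁆ - 6 • Y (tbr x y z) w - 6 • Y z (tbr x y w)
        = Splus (tbr x y (br z w) - br (tbr x y z) w - br z (tbr x y w)) := by
  intro x y z w
  have hD : ∀ v, ⁅6 • Y x y, Splus v⁆ = Splus (tbr x y v) := fun v => by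
    rw [nsmul_lie, hRed]
  have h36 : 36 • ⁅Y x y, Y z w⁆ = ⁅6 • Y x y, 6 • Y z w⁆ := by
    rw [nsmul_lie, lie_nsmul, smul_smul]
    norm_num
  rw [h36, hY z w, lie_lie_add_eq_of_lie_comp Splus (tbr x y) _ hD, hY, hY, map_sub, map_sub]
  abel

/-- Under the hypotheses 6·Y(x;y) = [S⁺x, S⁺y] + S⁺[x,y] and
reductivity 6·[Y(x;y), S⁺z] = S⁺[x,y,z], one has
36·[Y(x;y), Y(z;w)] - 6·Y([x,y,z];w) - 6·Y(z;[x,y,w])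
  = S⁺([x,y,[z,w]] - [[x,y,z],w] - [z,[x,y,w]]). -/
theorem stmt_8 {k : Type*} [Field k] [CharZero k]
    {M L : Type*} [AddCommGroup M] [Module k M] [LieRing L] [LieAlgebra k L]
    (br : M →ₗ[k] M →ₗ[k] M) (tbr : M →ₗ[k] M →ₗ[k] M →ₗ[k] M)
    (Splus : M →ₗ[k] L) (Y : M →ₗ[k] M →ₗ[k] L)
    (hY : ∀ x y : M, 6 • Y x y = ⁅Splus x, Splus y⁆ + Splus (br x y))
    (hRed : ∀ x y z : M, 6 • ⁅Y x y, Splus z⁆ = Splus (tbr x y z)) :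
    ∀ x y z w : M,
      36 • ⁅Y x y, Y z w⁆ - 6 • Y (tbr x y z) w - 6 • Y z (tbr x y w)
        = Splus (tbr x y (br z w) - br (tbr x y z) w - br z (tbr x y w)) :=
  stmt_8_general br tbr Splus Y hY hRed
end

section
/- (Hidden associativity.) Let S⁺ : M → L be a linear map, Y : M × M → L a bilinear map, [·,·] : M × M → M a bilinear binary bracket and [·,·,·] : M × M × M → M a trilinear ternary bracket. Assume (i) 6·Y(x;y) = [S⁺_x, S⁺_y] + S⁺_{[x,y]} for all x, y in M, (ii) the reductivity condition 6·[Y(x;y), S⁺_z] = S⁺_{[x,y,z]} for all x, y, z in M, and (iii) the Sagle–Yamaguti identity [x,y,[z,w]] = [[x,y,z],w] + [z,[x,y,w]] for all x, y, z, w in M. Then the Yamagutian obeys the commutation relations 6·[Y(x;y), Y(z;w)] = Y([x,y,z]; w) + Y(z; [x,y,w]) for all x, y, z, w in M. -/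
/-!
Expanding `6 • Y z w = ⁅S⁺ z, S⁺ w⁆ + S⁺ [z,w]` and letting `ad (Y x y)` act by the Leibniz rule,
reductivity turns `6 • ad (Y x y)` into `S⁺ ∘ [x,y,·]` on every term. Since `[x,y,·]` is a
derivation of the binary bracket (Sagle–Yamaguti), the result regroups into
`6 • Y ([x,y,z]; w) + 6 • Y (z; [x,y,w])`, and the extra factor `6` cancels in characteristic zero.
-/

section

variable {R M L : Type*} [CommRing R] [AddCommGroup M] [Module R M] [LieRing L] [Module R L]

theorem nsmul_lie_eq_of_derivation (n : ℕ) (br : M →ₗ[R] M →ₗ[R] M) (S : M →ₗ[R] L)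
    (Y : M →ₗ[R] M →ₗ[R] L) (u : L) (T : M →ₗ[R] M)
    (hY : ∀ z w : M, n • Y z w = ⁅S z, S w⁆ + S (br z w))
    (hu : ∀ z : M, n • ⁅u, S z⁆ = S (T z))
    (hT : ∀ z w : M, T (br z w) = br (T z) w + br z (T w)) (z w : M) :
    n • n • ⁅u, Y z w⁆ = n • (Y (T z) w + Y z (T w)) :=
  calc n • n • ⁅u, Y z w⁆
      = n • ⁅u, ⁅S z, S w⁆ + S (br z w)⁆ := by rw [← hY, lie_nsmul]
    _ = ⁅n • ⁅u, S z⁆, S w⁆ + ⁅S z, n • ⁅u, S w⁆⁆ + n • ⁅u, S (br z w)⁆ := by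
        rw [lie_add, leibniz_lie, smul_add, smul_add, nsmul_lie, lie_nsmul]
    _ = ⁅S (T z), S w⁆ + S (br (T z) w) + (⁅S z, S (T w)⁆ + S (br z (T w))) := by
        rw [hu, hu, hu, hT, map_add]
        abel
    _ = n • (Y (T z) w + Y z (T w)) := by rw [smul_add, hY, hY]

theorem nsmul_lie_eq_of_derivation_of_ne_zero [IsAddTorsionFree L] {n : ℕ} (hn : n ≠ 0)
    (br : M →ₗ[R] M →ₗ[R] M) (S : M →ₗ[R] L) (Y : M →ₗ[R] M →ₗ[R] L) (u : L) (T : M →ₗ[R] M)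
    (hY : ∀ z w : M, n • Y z w = ⁅S z, S w⁆ + S (br z w))
    (hu : ∀ z : M, n • ⁅u, S z⁆ = S (T z))
    (hT : ∀ z w : M, T (br z w) = br (T z) w + br z (T w)) (z w : M) :
    n • ⁅u, Y z w⁆ = Y (T z) w + Y z (T w) :=
  nsmul_right_injective hn (nsmul_lie_eq_of_derivation n br S Y u T hY hu hT z w)

end

/-- hidden associativity: Under 6·Y(x;y) = [S⁺x, S⁺y] + S⁺[x,y],
reductivity 6·[Y(x;y), S⁺z] = S⁺[x,y,z], and the Sagle–Yamaguti identity
[x,y,[z,w]] = [[x,y,z],w] + [z,[x,y,w]], the Yamagutian obeys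
6·[Y(x;y), Y(z;w)] = Y([x,y,z];w) + Y(z;[x,y,w]). -/
theorem stmt_9 {k : Type*} [Field k] [CharZero k]
    {M L : Type*} [AddCommGroup M] [Module k M] [LieRing L] [LieAlgebra k L]
    (br : M →ₗ[k] M →ₗ[k] M) (tbr : M →ₗ[k] M →ₗ[k] M →ₗ[k] M)
    (Splus : M →ₗ[k] L) (Y : M →ₗ[k] M →ₗ[k] L)
    (hY : ∀ x y : M, 6 • Y x y = ⁅Splus x, Splus y⁆ + Splus (br x y))
    (hRed : ∀ x y z : M, 6 • ⁅Y x y, Splus z⁆ = Splus (tbr x y z))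
    (hSY : ∀ x y z w : M,
      tbr x y (br z w) = br (tbr x y z) w + br z (tbr x y w)) :
    ∀ x y z w : M,
      6 • ⁅Y x y, Y z w⁆ = Y (tbr x y z) w + Y z (tbr x y w) := by
  intro x y z w
  have : IsAddTorsionFree L := .of_isTorsionFree k L
  exact nsmul_lie_eq_of_derivation_of_ne_zero (by norm_num) br Splus Y (Y x y) (tbr x y)
    hY (hRed x y) (hSY x y) z w
end
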